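/- arXiv:2009.13781 — 3 statements merged into one kernel-verified Lean document; each statement's English description precedes it below -/
import Mathlib

section
/- Let X be a real random variable and a ≥ 0 a real number such that P(X = 0) ≥ a and P(X = 1) ≥ a. Then for every real t with |t| ≤ π, the characteristic function satisfies |E e^{itX}| ≤ 1 − (a/π²)·t² ≤ e^{−a·π^{−2}·t²}. -/
/-!
Split `Ω` into `{X = 0}`, `{X = 1}` and the rest. The integral is `P(X = 0) + P(X = 1) e^{it}` plus
a term of norm at most the remaining mass. Pairing a mass `a` from each atom gives `a (1 + e^{it})`,
of norm `2a cos(t/2)`, so the integral has norm at most `1 - a (2 - 2 cos(t/2))`; the bound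
`cos x ≤ 1 - 2x²/π²` on `[-π, π]` turns this into `1 - a t²/π²`.
-/
open MeasureTheory Complex

lemma norm_smul_add_smul_le {E : Type*} [SeminormedAddCommGroup E] [NormedSpace ℝ E] {u v : E}
    (hu : ‖u‖ ≤ 1) (hv : ‖v‖ ≤ 1) {p α β : ℝ} (hp : 0 ≤ p) (hα : p ≤ α) (hβ : p ≤ β) :
    ‖α • u + β • v‖ ≤ α + β - p * (2 - ‖u + v‖) := by
  have hsplit : α • u + β • v = p • (u + v) + (α - p) • u + (β - p) • v := by
    simp only [smul_add, sub_smul]; abel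
  calc ‖α • u + β • v‖ ≤ ‖p • (u + v)‖ + ‖(α - p) • u‖ + ‖(β - p) • v‖ := by
        rw [hsplit]; exact norm_add₃_le
    _ = p * ‖u + v‖ + (α - p) * ‖u‖ + (β - p) * ‖v‖ := by
        rw [norm_smul_of_nonneg hp, norm_smul_of_nonneg (sub_nonneg.2 hα),
          norm_smul_of_nonneg (sub_nonneg.2 hβ)]
    _ ≤ p * ‖u + v‖ + (α - p) * 1 + (β - p) * 1 := by gcongr
    _ = α + β - p * (2 - ‖u + v‖) := by ring

section

variable {Ω E : Type*} [MeasurableSpace Ω] {μ : Measure Ω} [IsProbabilityMeasure μ]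
  [NormedAddCommGroup E] [NormedSpace ℝ E] [CompleteSpace E]

lemma norm_integral_le_of_eqOn_const {f : Ω → E} (hf : AEStronglyMeasurable f μ)
    (hf1 : ∀ ω, ‖f ω‖ ≤ 1) {A B : Set Ω} (hA : MeasurableSet A) (hB : MeasurableSet B)
    (hAB : Disjoint A B) {u v : E} (hfu : Set.EqOn f (fun _ ↦ u) A)
    (hfv : Set.EqOn f (fun _ ↦ v) B) (hu : ‖u‖ ≤ 1) (hv : ‖v‖ ≤ 1) {p : ℝ} (hp : 0 ≤ p)
    (hpA : p ≤ μ.real A) (hpB : p ≤ μ.real B) :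
    ‖∫ ω, f ω ∂μ‖ ≤ 1 - p * (2 - ‖u + v‖) := by
  have hfi : Integrable f μ := .of_bound hf 1 (.of_forall hf1)
  have hAB' : MeasurableSet (A ∪ B) := hA.union hB
  have hmain : ∫ ω in A ∪ B, f ω ∂μ = μ.real A • u + μ.real B • v := by
    rw [setIntegral_union hAB hB hfi.integrableOn hfi.integrableOn,
      setIntegral_congr_fun hA hfu, setIntegral_congr_fun hB hfv,
      setIntegral_const, setIntegral_const]
  have hrest : ‖∫ ω in (A ∪ B)ᶜ, f ω ∂μ‖ ≤ 1 - μ.real A - μ.real B := by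
    calc ‖∫ ω in (A ∪ B)ᶜ, f ω ∂μ‖ ≤ 1 * μ.real (A ∪ B)ᶜ :=
          norm_setIntegral_le_of_norm_le_const (measure_lt_top _ _) fun ω _ ↦ hf1 ω
      _ = 1 - μ.real A - μ.real B := by
          rw [one_mul, measureReal_compl hAB', measureReal_union hAB hB, probReal_univ]; ring
  rw [← integral_add_compl hAB' hfi, hmain]
  calc ‖μ.real A • u + μ.real B • v + ∫ ω in (A ∪ B)ᶜ, f ω ∂μ‖
      ≤ ‖μ.real A • u + μ.real B • v‖ + ‖∫ ω in (A ∪ B)ᶜ, f ω ∂μ‖ := norm_add_le _ _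
    _ ≤ (μ.real A + μ.real B - p * (2 - ‖u + v‖)) + (1 - μ.real A - μ.real B) :=
        add_le_add (norm_smul_add_smul_le hu hv hp hpA hpB) hrest
    _ = 1 - p * (2 - ‖u + v‖) := by ring

end

lemma one_add_exp_I_mul_ofReal (t : ℝ) :
    1 + exp (I * t) = exp (I * (t / 2 : ℝ)) * (2 * Real.cos (t / 2)) := by
  push_cast
  rw [Complex.cos, mul_div_cancel₀ _ two_ne_zero, mul_add, ← exp_add, ← exp_add]
  ring_nf
  simp [add_comm]

lemma norm_one_add_exp_I_mul_le {t : ℝ} (ht : |t| ≤ Real.pi) :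
    ‖1 + exp (I * t)‖ ≤ 2 - t ^ 2 / Real.pi ^ 2 := by
  obtain ⟨hlo, hhi⟩ := abs_le.1 ht
  have hcos_nonneg : 0 ≤ Real.cos (t / 2) :=
    Real.cos_nonneg_of_neg_pi_div_two_le_of_le (by linarith) (by linarith)
  have hcos : Real.cos (t / 2) ≤ 1 - 2 / Real.pi ^ 2 * (t / 2) ^ 2 :=
    Real.cos_le_one_sub_mul_cos_sq (by rw [abs_div, abs_two]; linarith)
  rw [one_add_exp_I_mul_ofReal, norm_mul, norm_exp_I_mul_ofReal, one_mul, norm_mul,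
    Complex.norm_two, norm_real, Real.norm_of_nonneg hcos_nonneg]
  linarith [show 2 / Real.pi ^ 2 * (t / 2) ^ 2 = t ^ 2 / Real.pi ^ 2 / 2 by ring]

theorem stmt6 {Ω : Type*} [MeasurableSpace Ω] (μ : Measure Ω) [IsProbabilityMeasure μ]
    (X : Ω → ℝ) (hX : Measurable X) (a : ℝ) (ha : 0 ≤ a)
    (h0 : ENNReal.ofReal a ≤ μ {ω | X ω = 0})
    (h1 : ENNReal.ofReal a ≤ μ {ω | X ω = 1}) :
    ∀ t : ℝ, |t| ≤ Real.pi →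
      ‖∫ ω, Complex.exp (Complex.I * t * X ω) ∂μ‖ ≤ 1 - (a / Real.pi ^ 2) * t ^ 2 ∧
      1 - (a / Real.pi ^ 2) * t ^ 2 ≤ Real.exp (-(a / Real.pi ^ 2 * t ^ 2)) := by
  intro t ht
  refine ⟨?_, by linarith [Real.add_one_le_exp (-(a / Real.pi ^ 2 * t ^ 2))]⟩
  have hprob {x : ℝ} (h : ENNReal.ofReal a ≤ μ {ω | X ω = x}) : a ≤ μ.real {ω | X ω = x} :=
    (ENNReal.ofReal_le_iff_le_toReal (measure_ne_top _ _)).1 h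
  have hbound : ‖∫ ω, exp (I * t * X ω) ∂μ‖ ≤ 1 - a * (2 - ‖1 + exp (I * t)‖) :=
    norm_integral_le_of_eqOn_const (by fun_prop) (fun ω ↦ by simp [mul_assoc, ← ofReal_mul])
      (hX (measurableSet_singleton 0)) (hX (measurableSet_singleton 1))
      (Set.disjoint_left.2 fun ω h0 h1 ↦ zero_ne_one (h0.symm.trans h1 : (0 : ℝ) = 1))
      (fun ω (h : X ω = 0) ↦ by simp [h]) (fun ω (h : X ω = 1) ↦ by simp [h])
      (by simp) (by simp) ha (hprob h0) (hprob h1)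
  calc _ ≤ 1 - a * (2 - ‖1 + exp (I * t)‖) := hbound
    _ ≤ 1 - a * (t ^ 2 / Real.pi ^ 2) := by gcongr; linarith [norm_one_add_exp_I_mul_le ht]
    _ = 1 - (a / Real.pi ^ 2) * t ^ 2 := by ring
end

section
/- For every integer m ≥ 0, P(Po(m) < m) < P(Po(m+1) < m+1) < 1/2, where P(Po(λ) < m) := e^{−λ} ∑_{k=0}^{m−1} λ^k / k! is the probability that a Poisson random variable with mean λ is strictly less than m (an empty sum being 0). -/
/-!
Write `b = p + 2`. Since `d/dλ P(Po(λ) ≤ p) = -e^{-λ} λ^p / p!`, the increment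
`P(Po(b) < b) - P(Po(b - 1) < b - 1)` equals
`e^{-b} b^{p+1} / (p+1)! - ∫_{b-1}^{b} e^{-y} y^p / p! dy`.
On `[b - 1, b]` the bound `y^p ≤ b^p e^{p (y - b) / b}` dominates the integrand by an exponential,
and the increment is then positive because `e^{2x} < (1 + x) / (1 - x)` at `x = 1 / b`.

For the bound `1/2`, the terms `n^k / k!` pair off around `k = n`:
`n^{n-1-j} / (n-1-j)! ≤ n^{n+j} / (n+j)!` because `(n - i)(n + i) ≤ n²`. Hence twice the sum
over `k < n` is less than the sum over `k ≤ 2n`, which is at most `e^n`.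
-/

open Finset

/-- `poissonLT lam m = P(Po(lam) < m) = e^{-lam} ∑_{k=0}^{m-1} lam^k / k!`. -/
noncomputable def poissonLT (lam : ℝ) (m : ℕ) : ℝ :=
  Real.exp (-lam) * ∑ k ∈ Finset.range m, lam ^ k / (Nat.factorial k : ℝ)

open Real Nat

lemma poissonLT_succ (lam : ℝ) (m : ℕ) :
    poissonLT lam (m + 1) = poissonLT lam m + exp (-lam) * lam ^ m / m ! := by
  rw [poissonLT, poissonLT, sum_range_succ]; ring

lemma hasDerivAt_poissonLT_succ (p : ℕ) (x : ℝ) :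
    HasDerivAt (fun y ↦ poissonLT y (p + 1)) (-(exp (-x) * x ^ p / p !)) x := by
  induction p with
  | zero =>
    simpa [poissonLT] using (hasDerivAt_neg x).exp
  | succ p ih =>
    simp_rw [poissonLT_succ _ (p + 1)]
    have hterm :=
      ((hasDerivAt_neg x).exp.mul (hasDerivAt_pow (p + 1) x)).div_const ((p + 1) ! : ℝ)
    refine (ih.add hterm).congr_deriv ?_
    rw [factorial_succ]
    push_cast
    field_simp
    ring

lemma poissonLT_succ_sub_eq_integral (p : ℕ) (a b : ℝ) :
    poissonLT a (p + 1) - poissonLT b (p + 1) = ∫ y in a..b, exp (-y) * y ^ p / p ! := by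
  have hftc := intervalIntegral.integral_eq_sub_of_hasDerivAt (a := a) (b := b)
    (fun x _ ↦ hasDerivAt_poissonLT_succ p x) (by apply Continuous.intervalIntegrable; fun_prop)
  rw [intervalIntegral.integral_neg] at hftc
  linarith

lemma exp_neg_mul_pow_le (p : ℕ) {y b : ℝ} (hy : 0 ≤ y) (hb : 0 < b) :
    exp (-y) * y ^ p ≤ exp (-b) * b ^ p * exp ((1 - p / b) * (b - y)) := by
  have hyb : y / b ≤ exp (-((b - y) / b)) := by
    have := add_one_le_exp (-((b - y) / b))
    have : y / b = -((b - y) / b) + 1 := by field_simp; ring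
    linarith
  calc exp (-y) * y ^ p = exp (-y) * b ^ p * (y / b) ^ p := by
        rw [div_pow]; field_simp
    _ ≤ exp (-y) * b ^ p * exp (-((b - y) / b)) ^ p := by gcongr
    _ = exp (-b) * b ^ p * exp ((1 - p / b) * (b - y)) := by
        have hexp :
            exp (-y) * exp (p * -((b - y) / b)) = exp (-b) * exp ((1 - p / b) * (b - y)) := by
          rw [← exp_add, ← exp_add]
          congr 1
          field_simp
          ring
        rw [← exp_nat_mul]
        linear_combination b ^ p * hexp

lemma integral_exp_mul_sub {c : ℝ} (hc : c ≠ 0) (a b : ℝ) :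
    ∫ y in a..b, exp (c * (b - y)) = (exp (c * (b - a)) - 1) / c := by
  rw [intervalIntegral.integral_comp_sub_left (fun t ↦ exp (c * t)),
    intervalIntegral.integral_comp_mul_left _ hc, integral_exp]
  simp only [sub_self, mul_zero, exp_zero, smul_eq_mul]
  field_simp

lemma exp_two_mul_lt_one_add_div_one_sub {x : ℝ} (hx₀ : 0 < x) (hx₁ : x < 1) :
    exp (2 * x) < (1 + x) / (1 - x) := by
  have hsum := hasSum_log_sub_log_of_abs_lt_one (abs_lt.mpr ⟨by linarith, hx₁⟩)
  have h := sum_le_hasSum (range 2) (fun k _ ↦ by positivity) hsum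
  rw [← log_div (by linarith) (by linarith)] at h
  rw [← exp_log (show 0 < (1 + x) / (1 - x) by apply _root_.div_pos <;> linarith)]
  apply exp_lt_exp.mpr
  norm_num [sum_range_succ] at h
  nlinarith [pow_pos hx₀ 3]

lemma integral_exp_neg_mul_pow_div_factorial_lt (p : ℕ) :
    ∫ y in (p + 1 : ℝ)..(p + 2), exp (-y) * y ^ p / p ! <
      exp (-(p + 2)) * (p + 2) ^ (p + 1) / (p + 1) ! := by
  set b : ℝ := p + 2
  have hb₀ : 0 < b := by positivity
  have hab : (p + 1 : ℝ) = b - 1 := by ring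
  have hb₁ : 0 < b - 1 := by linarith [hab, show (0:ℝ) < p + 1 by positivity]
  set C := exp (-b) * b ^ p / (p ! : ℝ) with hC
  have hpointwise :
      ∀ y ∈ Set.Icc (b - 1) b, exp (-y) * y ^ p / p ! ≤ C * exp (2 / b * (b - y)) := by
    intro y hy
    have h := exp_neg_mul_pow_le p (by linarith [hy.1]) hb₀ (y := y)
    rw [show 1 - (p : ℝ) / b = 2 / b by field_simp; ring] at h
    calc exp (-y) * y ^ p / p ! ≤ exp (-b) * b ^ p * exp (2 / b * (b - y)) / p ! := by gcongr
      _ = C * exp (2 / b * (b - y)) := by ring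
  have hexp :=
    exp_two_mul_lt_one_add_div_one_sub (x := 1 / b) (by positivity) (by rw [div_lt_one hb₀]; linarith)
  rw [show 2 * (1 / b) = 2 / b by ring, show (1 + 1 / b) / (1 - 1 / b) = 1 + 2 / (b - 1) by
    field_simp; ring] at hexp
  rw [hab]
  calc ∫ y in (b - 1)..b, exp (-y) * y ^ p / p !
      ≤ ∫ y in (b - 1)..b, C * exp (2 / b * (b - y)) :=
        intervalIntegral.integral_mono_on (by linarith)
          (by apply Continuous.intervalIntegrable; fun_prop)
          (by apply Continuous.intervalIntegrable; fun_prop) hpointwise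
    _ = C * ((exp (2 / b) - 1) / (2 / b)) := by
        rw [intervalIntegral.integral_const_mul, integral_exp_mul_sub (by positivity),
          sub_sub_cancel, mul_one]
    _ < C * ((2 / (b - 1)) / (2 / b)) := by gcongr; linarith
    _ = exp (-b) * b ^ (p + 1) / (p + 1) ! := by
        rw [hC, factorial_succ, Nat.cast_mul, Nat.cast_succ, ← hab]; field_simp; ring

lemma poissonLT_self_lt_succ (m : ℕ) : poissonLT m m < poissonLT (m + 1) (m + 1) := by
  cases m with
  | zero => simp [poissonLT, exp_pos]
  | succ p =>
    have hI := poissonLT_succ_sub_eq_integral p (p + 1) (p + 2)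
    have hlt := integral_exp_neg_mul_pow_div_factorial_lt p
    rw [poissonLT_succ _ (p + 1)]
    push_cast
    rw [show (p : ℝ) + 1 + 1 = p + 2 by ring]
    linarith

lemma factorial_add_two_mul_add_one_le (r j : ℕ) :
    (r + 2 * j + 1) ! ≤ (r + j + 1) ^ (2 * j + 1) * r ! := by
  induction j generalizing r with
  | zero => simp [factorial_succ]
  | succ j ih =>
    have hpair : (r + 2 * j + 3) * (r + 1) ≤ (r + j + 2) ^ 2 := by nlinarith
    calc (r + 2 * (j + 1) + 1) ! = (r + 2 * j + 3) * (r + 1 + 2 * j + 1) ! := by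
          rw [show r + 2 * (j + 1) + 1 = (r + 1 + 2 * j + 1) + 1 by ring, factorial_succ]; ring_nf
      _ ≤ (r + 2 * j + 3) * ((r + j + 2) ^ (2 * j + 1) * (r + 1) !) := by
          gcongr; simpa [add_right_comm] using ih (r + 1)
      _ = (r + 2 * j + 3) * (r + 1) * ((r + j + 2) ^ (2 * j + 1) * r !) := by
          rw [factorial_succ]; ring
      _ ≤ (r + j + 2) ^ 2 * ((r + j + 2) ^ (2 * j + 1) * r !) := by gcongr
      _ = (r + (j + 1) + 1) ^ (2 * (j + 1) + 1) * r ! := by ring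

lemma pow_div_factorial_sub_le_pow_div_factorial_add {n j : ℕ} (hj : j < n) :
    (n : ℝ) ^ (n - 1 - j) / (n - 1 - j) ! ≤ (n : ℝ) ^ (n + j) / (n + j) ! := by
  obtain ⟨r, rfl⟩ : ∃ r, n = r + j + 1 := ⟨n - j - 1, by omega⟩
  rw [show r + j + 1 - 1 - j = r by omega, show r + j + 1 + j = r + 2 * j + 1 by ring,
    div_le_div_iff₀ (by positivity) (by positivity)]
  have hfact : ((r + 2 * j + 1) ! : ℝ) ≤ ((r + j + 1 : ℕ) : ℝ) ^ (2 * j + 1) * r ! := by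
    exact_mod_cast factorial_add_two_mul_add_one_le r j
  calc ((r + j + 1 : ℕ) : ℝ) ^ r * (r + 2 * j + 1) !
      ≤ ((r + j + 1 : ℕ) : ℝ) ^ r * (((r + j + 1 : ℕ) : ℝ) ^ (2 * j + 1) * r !) := by
        gcongr
    _ = ((r + j + 1 : ℕ) : ℝ) ^ (r + 2 * j + 1) * r ! := by ring

lemma poissonLT_self_lt_half (n : ℕ) : poissonLT n n < 1 / 2 := by
  set term : ℕ → ℝ := fun k ↦ (n : ℝ) ^ k / (k ! : ℝ)
  have hreflect : ∑ k ∈ range n, term k ≤ ∑ k ∈ range n, term (n + k) := by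
    rw [← sum_range_reflect term n]
    exact sum_le_sum fun j hj ↦ pow_div_factorial_sub_le_pow_div_factorial_add (mem_range.mp hj)
  have hsplit : ∑ k ∈ range (n + n + 1), term k =
      ∑ k ∈ range n, term k + ∑ k ∈ range n, term (n + k) + term (n + n) := by
    rw [sum_range_succ, sum_range_add]
  have hlast : 0 < term (n + n) := by
    have hpow : 0 < (n : ℝ) ^ (n + n) := by
      rw [pow_add]; exact_mod_cast Nat.mul_pos Nat.pow_self_pos Nat.pow_self_pos
    exact div_pos hpow (by positivity)
  have hexp := sum_le_exp_of_nonneg (Nat.cast_nonneg n) (n + n + 1)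
  rw [poissonLT, exp_neg, inv_mul_lt_iff₀ (exp_pos _)]
  linarith

theorem stmt9 (m : ℕ) :
    poissonLT m m < poissonLT (m + 1) (m + 1) ∧ poissonLT (m + 1) (m + 1) < 1 / 2 :=
  ⟨poissonLT_self_lt_succ m, by exact_mod_cast poissonLT_self_lt_half (m + 1)⟩
end

section
/- For every integer m ≥ 0, P(Po(m) ≤ m) > P(Po(m+1) ≤ m+1) > 1/2, where P(Po(λ) ≤ m) := e^{−λ} ∑_{k=0}^{m} λ^k / k! is the probability that a Poisson random variable with mean λ is at most m. -/
/-!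
Since `d/dλ P(Po(λ) ≤ n) = -λ^n e^{-λ} / n!`, we have
`∫_a^b t^n e^{-t} dt = n! (P(Po(a) ≤ n) - P(Po(b) ≤ n))`.
With `g(t) = t^m e^{-t}`, peeling off the last term of `P(Po(m+1) ≤ m+1)` gives
`m! (P(Po(m) ≤ m) - P(Po(m+1) ≤ m+1)) = ∫_m^{m+1} g - g(m+1)`, which is positive because `g`
strictly decreases on `[m, ∞)`.
For the bound `1/2`, `n! (1 - P(Po(n) ≤ n)) = ∫_0^n t^n e^{-t} dt`. Reflecting about `n` does
not decrease the integrand (after scaling this is `tanh x ≤ x`), so this is at most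
`∫_n^{2n} t^n e^{-t} dt = n! (P(Po(n) ≤ n) - P(Po(2n) ≤ n)) < n! P(Po(n) ≤ n)`.
-/

open Finset

/-- `poissonLE lam m = P(Po(lam) ≤ m) = e^{-lam} ∑_{k=0}^{m} lam^k / k!`. -/
noncomputable def poissonLE (lam : ℝ) (m : ℕ) : ℝ :=
  Real.exp (-lam) * ∑ k ∈ Finset.range (m + 1), lam ^ k / (Nat.factorial k : ℝ)

open Real Set
open scoped Nat

lemma poissonLE_zero_right (lam : ℝ) : poissonLE lam 0 = exp (-lam) := by
  simp [poissonLE]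

lemma poissonLE_succ (lam : ℝ) (n : ℕ) :
    poissonLE lam (n + 1) = poissonLE lam n + lam ^ (n + 1) * exp (-lam) / (n + 1)! := by
  simp only [poissonLE, sum_range_succ]
  ring

lemma poissonLE_zero_left (n : ℕ) : poissonLE 0 n = 1 := by
  simp [poissonLE, sum_range_succ']

lemma poissonLE_pos {lam : ℝ} (hlam : 0 ≤ lam) (n : ℕ) : 0 < poissonLE lam n := by
  have h0 : (1 : ℝ) ≤ ∑ k ∈ range (n + 1), lam ^ k / k ! := by
    simpa using single_le_sum (f := fun k => lam ^ k / (k ! : ℝ))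
      (fun k _ => by positivity) (mem_range.2 n.succ_pos)
  exact mul_pos (exp_pos _) (by linarith)

lemma hasDerivAt_poissonLE (n : ℕ) (lam : ℝ) :
    HasDerivAt (poissonLE · n) (-(lam ^ n * exp (-lam) / n !)) lam := by
  have hexp : HasDerivAt (fun t => exp (-t)) (-exp (-lam)) lam := by
    simpa using (hasDerivAt_neg lam).exp
  induction n with
  | zero => simpa [poissonLE_zero_right] using hexp
  | succ n ih =>
    simp only [poissonLE_succ]
    have hterm := ((hasDerivAt_pow (n + 1) lam).mul hexp).div_const ((n + 1)! : ℝ)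
    refine (ih.add hterm).congr_deriv ?_
    rw [Nat.factorial_succ]
    push_cast
    field_simp
    ring

lemma integral_pow_mul_exp_neg (n : ℕ) (a b : ℝ) :
    ∫ t in a..b, t ^ n * exp (-t) = n ! * (poissonLE a n - poissonLE b n) := by
  have hderiv (t : ℝ) :
      HasDerivAt (fun s => -(n ! : ℝ) * poissonLE s n) (t ^ n * exp (-t)) t := by
    refine ((hasDerivAt_poissonLE n t).const_mul _).congr_deriv ?_
    rw [neg_mul_neg, mul_div_cancel₀ _ (by positivity)]
  have hcont : Continuous fun t : ℝ => t ^ n * exp (-t) := by fun_prop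
  rw [intervalIntegral.integral_eq_sub_of_hasDerivAt (fun t _ => hderiv t)
    (hcont.intervalIntegrable a b)]
  ring

lemma strictAntiOn_pow_mul_exp_neg (n : ℕ) :
    StrictAntiOn (fun t : ℝ => t ^ n * exp (-t)) (Ici (n : ℝ)) := by
  refine strictAntiOn_of_deriv_neg (convex_Ici _) (by fun_prop) fun t ht => ?_
  rw [interior_Ici] at ht
  have ht0 : 0 < t := lt_of_le_of_lt n.cast_nonneg ht
  have hderiv : HasDerivAt (fun t : ℝ => t ^ n * exp (-t))
      (n * t ^ (n - 1) * exp (-t) + t ^ n * -exp (-t)) t :=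
    (hasDerivAt_pow n t).mul (by simpa using (hasDerivAt_neg t).exp)
  rw [hderiv.deriv]
  -- `n = 0` separately: there `t ^ n ≠ t * t ^ (n - 1)`
  rcases n with _ | n
  · simpa using exp_pos (-t)
  · have : ((n + 1 : ℕ) : ℝ) * t ^ n < t ^ (n + 1) := by
      rw [pow_succ']
      exact mul_lt_mul_of_pos_right ht (pow_pos ht0 n)
    simp only [Nat.add_sub_cancel]
    nlinarith [exp_pos (-t)]

lemma one_sub_mul_exp_le_one_add_mul_exp_neg {x : ℝ} (hx : 0 ≤ x) :
    (1 - x) * exp x ≤ (1 + x) * exp (-x) := by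
  let h : ℝ → ℝ := fun y => (1 + y) * exp (-y) - (1 - y) * exp y
  have hderiv (y : ℝ) : HasDerivAt h (y * (exp y - exp (-y))) y := by
    have hneg : HasDerivAt (fun y => exp (-y)) (-exp (-y)) y := by
      simpa using (hasDerivAt_neg y).exp
    refine ((((hasDerivAt_id y).const_add 1).mul hneg).sub
      (((hasDerivAt_id y).const_sub 1).mul (hasDerivAt_exp y))).congr_deriv ?_
    simp only [id]
    ring
  have hmono : MonotoneOn h (Ici 0) := by
    refine monotoneOn_of_deriv_nonneg (convex_Ici 0) (by fun_prop)
      (fun y _ => (hderiv y).differentiableAt.differentiableWithinAt) fun y hy => ?_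
    rw [interior_Ici] at hy
    rw [(hderiv y).deriv]
    exact mul_nonneg (le_of_lt hy) (sub_nonneg.2 (exp_le_exp.2 (by linarith [hy.out])))
  have : h 0 ≤ h x := hmono self_mem_Ici hx hx
  simp only [h] at this
  norm_num at this
  linarith

lemma pow_mul_exp_neg_sub_le_add (n : ℕ) {u : ℝ} (hu : 0 ≤ u) (hun : u ≤ n) :
    (n - u) ^ n * exp (-(n - u)) ≤ (n + u) ^ n * exp (-(n + u)) := by
  rcases n.eq_zero_or_pos with rfl | hn
  · obtain rfl : u = 0 := le_antisymm (by simpa using hun) hu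
    simp
  have hn : (0 : ℝ) < n := by exact_mod_cast hn
  -- the scale-free inequality at `x = u / n`, to be raised to the `n`-th power
  have hscaled : (n - u) * exp (u / n) ≤ (n + u) * exp (-(u / n)) := by
    have key := one_sub_mul_exp_le_one_add_mul_exp_neg (div_nonneg hu hn.le)
    calc (n - u) * exp (u / n) = n * ((1 - u / n) * exp (u / n)) := by field_simp
      _ ≤ n * ((1 + u / n) * exp (-(u / n))) := mul_le_mul_of_nonneg_left key hn.le
      _ = (n + u) * exp (-(u / n)) := by field_simp
  have hpow := pow_le_pow_left₀ (mul_nonneg (sub_nonneg.2 hun) (exp_pos _).le) hscaled n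
  rw [mul_pow, mul_pow, ← exp_nat_mul, ← exp_nat_mul, mul_neg, mul_div_cancel₀ _ hn.ne']
    at hpow
  calc (n - u) ^ n * exp (-(n - u)) = (n - u) ^ n * exp u * exp (-n) := by
        rw [mul_assoc, ← exp_add]; ring_nf
    _ ≤ (n + u) ^ n * exp (-u) * exp (-n) := by gcongr
    _ = (n + u) ^ n * exp (-(n + u)) := by rw [mul_assoc, ← exp_add]; ring_nf

lemma poissonLE_succ_self_lt (m : ℕ) : poissonLE (m + 1) (m + 1) < poissonLE m m := by
  have hfac : (0 : ℝ) < m ! := by positivity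
  have hlast : ((m : ℝ) + 1) ^ (m + 1) * exp (-(m + 1)) / (m + 1)! =
      (m + 1) ^ m * exp (-(m + 1)) / m ! := by
    rw [Nat.factorial_succ]
    push_cast
    field_simp
    ring
  have hint : (m + 1) ^ m * exp (-(m + 1)) < ∫ t in (m : ℝ)..m + 1, t ^ m * exp (-t) := by
    have hm : (m : ℝ) < m + 1 := by linarith
    have hanti : StrictAntiOn (fun t : ℝ => t ^ m * exp (-t)) (Icc (m : ℝ) (m + 1)) :=
      (strictAntiOn_pow_mul_exp_neg m).mono Icc_subset_Ici_self
    simpa using intervalIntegral.integral_lt_integral_of_continuousOn_of_le_of_exists_lt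
      (f := fun _ => ((m : ℝ) + 1) ^ m * exp (-(m + 1))) hm continuousOn_const (by fun_prop)
      (fun t ht => hanti.antitoneOn (Ioc_subset_Icc_self ht) (right_mem_Icc.2 hm.le) ht.2)
      ⟨m, left_mem_Icc.2 hm.le, hanti (left_mem_Icc.2 hm.le) (right_mem_Icc.2 hm.le) hm⟩
  rw [integral_pow_mul_exp_neg] at hint
  have : (m + 1) ^ m * exp (-(m + 1)) / m ! < poissonLE m m - poissonLE (m + 1) m :=
    (div_lt_iff₀' hfac).2 hint
  rw [poissonLE_succ, hlast]
  linarith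

lemma half_lt_poissonLE_self (n : ℕ) : 1 / 2 < poissonLE n n := by
  have hrefl :
      ∫ t in (0 : ℝ)..n, t ^ n * exp (-t) ≤ ∫ t in (n : ℝ)..2 * n, t ^ n * exp (-t) :=
    calc ∫ t in (0 : ℝ)..n, t ^ n * exp (-t)
        = ∫ u in (0 : ℝ)..n, (n - u) ^ n * exp (-(n - u)) := by
          rw [intervalIntegral.integral_comp_sub_left (fun t => t ^ n * exp (-t))]
          simp
      _ ≤ ∫ u in (0 : ℝ)..n, (n + u) ^ n * exp (-(n + u)) :=
          intervalIntegral.integral_mono_on n.cast_nonneg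
            (Continuous.intervalIntegrable (by fun_prop) _ _)
            (Continuous.intervalIntegrable (by fun_prop) _ _)
            fun u hu => pow_mul_exp_neg_sub_le_add n hu.1 hu.2
      _ = ∫ t in (n : ℝ)..2 * n, t ^ n * exp (-t) := by
          rw [intervalIntegral.integral_comp_add_left (fun t => t ^ n * exp (-t))]
          ring_nf
  rw [integral_pow_mul_exp_neg, integral_pow_mul_exp_neg, poissonLE_zero_left] at hrefl
  have hle : 1 - poissonLE n n ≤ poissonLE n n - poissonLE (2 * n) n :=
    le_of_mul_le_mul_left hrefl (by positivity)
  linarith [poissonLE_pos (by positivity : (0 : ℝ) ≤ 2 * n) n]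

theorem stmt10 (m : ℕ) :
    poissonLE m m > poissonLE (m + 1) (m + 1) ∧ poissonLE (m + 1) (m + 1) > 1 / 2 :=
  ⟨poissonLE_succ_self_lt m, by exact_mod_cast half_lt_poissonLE_self (m + 1)⟩
end
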